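/- arXiv:2112.05169 — 2 statements merged into one kernel-verified Lean document; each statement's English description precedes it below -/
import Mathlib

section
/- Let x = x₀ + ι(x̲) and s = s₀ + ι(s̲) be paravectors in the real Clifford algebra ℝ_n with s ∉ [x]. Then both elements x² - 2s₀·x + (s₀² + ‖s̲‖²) and s² - 2x₀·s + (x₀² + ‖x̲‖²) are units in ℝ_n, and the two forms of the left slice monogenic Cauchy kernel agree: -(x² - 2s₀·x + (s₀² + ‖s̲‖²))⁻¹·(x - s̄) = (s - x̄)·(s² - 2x₀·s + (x₀² + ‖x̲‖²))⁻¹. -/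
noncomputable section

open CliffordAlgebra

/-- The quadratic form `Q(v) = -‖v‖²` on `ℝⁿ`, whose Clifford algebra is `ℝ_n`. -/
def cliffordQ (n : ℕ) : QuadraticForm ℝ (EuclideanSpace ℝ (Fin n)) :=
  -LinearMap.BilinMap.toQuadraticMap (innerₗ (EuclideanSpace ℝ (Fin n)))

/-
Writing `x = x₀ + p` and `s = s₀ + q` with `p² = -‖x̲‖²` and `q² = -‖s̲‖²`, the quadratic
`A = x² - 2s₀x + |s|²` collapses to `α + βp` with `α = (x₀-s₀)² + ‖s̲‖² - ‖x̲‖²` and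
`β = 2(x₀-s₀)`. Its conjugate `α - βp` inverts it up to the real factor `α² + β²‖x̲‖²`, which
vanishes only when `s ∈ [x]`; symmetrically for `B`. The identity `A(s - x̄) = -(x - s̄)B` is then
a direct expansion in which the only non-commuting product `pq` cancels, and it converts into the
equality of the two kernels once `A` and `B` are invertible.
-/

section ParavectorAlgebra

variable {R : Type*} [Ring R] [Algebra ℝ R] {p : R} {a : ℝ}

theorem algebraMap_add_smul_mul_algebraMap_sub_smul (hp : p * p = algebraMap ℝ R (-a))
    (α β : ℝ) :
    (algebraMap ℝ R α + β • p) * (algebraMap ℝ R α - β • p) =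
      algebraMap ℝ R (α ^ 2 + β ^ 2 * a) := by
  simp only [Algebra.algebraMap_eq_smul_one] at *
  simp only [add_mul, mul_sub, smul_mul_assoc, mul_smul_comm, hp, one_mul, mul_one]
  match_scalars <;> ring

theorem algebraMap_sub_smul_mul_algebraMap_add_smul (hp : p * p = algebraMap ℝ R (-a))
    (α β : ℝ) :
    (algebraMap ℝ R α - β • p) * (algebraMap ℝ R α + β • p) =
      algebraMap ℝ R (α ^ 2 + β ^ 2 * a) := by
  have h := algebraMap_add_smul_mul_algebraMap_sub_smul hp α (-β)
  rwa [neg_smul, ← sub_eq_add_neg, sub_neg_eq_add, neg_sq] at h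

theorem isUnit_algebraMap_add_smul (hp : p * p = algebraMap ℝ R (-a)) {α β : ℝ}
    (hN : α ^ 2 + β ^ 2 * a ≠ 0) : IsUnit (algebraMap ℝ R α + β • p) := by
  set N := α ^ 2 + β ^ 2 * a
  have hinv : algebraMap ℝ R N⁻¹ * algebraMap ℝ R N = 1 := by
    rw [← map_mul, inv_mul_cancel₀ hN, map_one]
  refine ⟨⟨_, algebraMap ℝ R N⁻¹ * (algebraMap ℝ R α - β • p), ?_, ?_⟩, rfl⟩
  · rw [← mul_assoc, ← Algebra.commutes, mul_assoc,
      algebraMap_add_smul_mul_algebraMap_sub_smul hp, hinv]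
  · rw [mul_assoc, algebraMap_sub_smul_mul_algebraMap_add_smul hp, hinv]

theorem paravector_quadratic_eq (hp : p * p = algebraMap ℝ R (-a)) (x₀ s₀ b : ℝ) :
    (algebraMap ℝ R x₀ + p) ^ 2 - (2 * s₀) • (algebraMap ℝ R x₀ + p) +
        algebraMap ℝ R (s₀ ^ 2 + b) =
      algebraMap ℝ R ((x₀ - s₀) ^ 2 + b - a) + (2 * (x₀ - s₀)) • p := by
  simp only [Algebra.algebraMap_eq_smul_one] at *
  simp only [sq, add_mul, mul_add, smul_mul_assoc, mul_smul_comm, hp, one_mul, mul_one]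
  match_scalars <;> ring

theorem paravector_quadratic_norm_ne_zero {x₀ s₀ b : ℝ} (ha : 0 ≤ a) (hb : 0 ≤ b)
    (h : (s₀, b) ≠ (x₀, a)) : ((x₀ - s₀) ^ 2 + b - a) ^ 2 + (2 * (x₀ - s₀)) ^ 2 * a ≠ 0 := by
  intro h0
  have hα : (x₀ - s₀) ^ 2 + b - a = 0 := by nlinarith [sq_nonneg (x₀ - s₀)]
  have hβ : (x₀ - s₀) ^ 2 * a = 0 := by nlinarith [sq_nonneg (x₀ - s₀)]
  have hx₀ : x₀ = s₀ := by
    rcases mul_eq_zero.mp hβ with hd | rfl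
    · linarith [pow_eq_zero_iff (n := 2) two_ne_zero |>.mp hd]
    · nlinarith [sq_nonneg (x₀ - s₀)]
  subst hx₀
  exact h (Prod.ext rfl (by linarith))

theorem isUnit_paravector_quadratic (hp : p * p = algebraMap ℝ R (-a)) {x₀ s₀ b : ℝ}
    (ha : 0 ≤ a) (hb : 0 ≤ b) (h : (s₀, b) ≠ (x₀, a)) :
    IsUnit ((algebraMap ℝ R x₀ + p) ^ 2 - (2 * s₀) • (algebraMap ℝ R x₀ + p) +
      algebraMap ℝ R (s₀ ^ 2 + b)) := by
  rw [paravector_quadratic_eq hp]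
  exact isUnit_algebraMap_add_smul hp (paravector_quadratic_norm_ne_zero ha hb h)

theorem paravector_quadratic_mul_sub_eq_neg_sub_mul {q : R} {b : ℝ} (hp : p * p = algebraMap ℝ R (-a))
    (hq : q * q = algebraMap ℝ R (-b)) (x₀ s₀ : ℝ) :
    ((algebraMap ℝ R x₀ + p) ^ 2 - (2 * s₀) • (algebraMap ℝ R x₀ + p) +
        algebraMap ℝ R (s₀ ^ 2 + b)) * ((algebraMap ℝ R s₀ + q) - (algebraMap ℝ R x₀ - p)) =
      -(((algebraMap ℝ R x₀ + p) - (algebraMap ℝ R s₀ - q)) *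
        ((algebraMap ℝ R s₀ + q) ^ 2 - (2 * x₀) • (algebraMap ℝ R s₀ + q) +
          algebraMap ℝ R (x₀ ^ 2 + a))) := by
  simp only [Algebra.algebraMap_eq_smul_one] at *
  simp only [sq, add_mul, mul_add, sub_mul, mul_sub, smul_mul_assoc, mul_smul_comm, hp, hq,
    smul_smul, one_mul, mul_one]
  match_scalars <;> ring

end ParavectorAlgebra

theorem Ring.inverse_mul_eq_mul_inverse {M₀ : Type*} [MonoidWithZero M₀] {a b y z : M₀}
    (ha : IsUnit a) (hb : IsUnit b) (h : a * y = z * b) :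
    Ring.inverse a * z = y * Ring.inverse b := by
  rw [← Ring.mul_inverse_cancel_right b z hb, ← h, mul_assoc,
    Ring.inverse_mul_cancel_left a _ ha]

theorem cliffordQ_ι_mul_ι (n : ℕ) (v : EuclideanSpace ℝ (Fin n)) :
    ι (cliffordQ n) v * ι (cliffordQ n) v = algebraMap ℝ _ (-‖v‖ ^ 2) := by
  rw [ι_sq_scalar, cliffordQ, neg_apply, LinearMap.BilinMap.toQuadraticMap_apply,
    innerₗ_apply_apply, real_inner_self_eq_norm_sq]

theorem left_cauchy_kernel_two_forms_general (n : ℕ)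
    (x₀ s₀ : ℝ) (xv sv : EuclideanSpace ℝ (Fin n))
    (hsx : (s₀, ‖sv‖) ≠ (x₀, ‖xv‖)) :
    let ιQ := CliffordAlgebra.ι (cliffordQ n)
    let x : CliffordAlgebra (cliffordQ n) := algebraMap ℝ _ x₀ + ιQ xv
    let s : CliffordAlgebra (cliffordQ n) := algebraMap ℝ _ s₀ + ιQ sv
    let xbar : CliffordAlgebra (cliffordQ n) := algebraMap ℝ _ x₀ - ιQ xv
    let sbar : CliffordAlgebra (cliffordQ n) := algebraMap ℝ _ s₀ - ιQ sv
    let A : CliffordAlgebra (cliffordQ n) :=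
      x ^ 2 - (2 * s₀) • x + algebraMap ℝ _ (s₀ ^ 2 + ‖sv‖ ^ 2)
    let B : CliffordAlgebra (cliffordQ n) :=
      s ^ 2 - (2 * x₀) • s + algebraMap ℝ _ (x₀ ^ 2 + ‖xv‖ ^ 2)
    IsUnit A ∧ IsUnit B ∧
      -(Ring.inverse A * (x - sbar)) = (s - xbar) * Ring.inverse B := by
  intro ιQ x s xbar sbar A B
  have hsx' : (s₀, ‖sv‖ ^ 2) ≠ (x₀, ‖xv‖ ^ 2) := by
    simpa [sq_eq_sq₀ (norm_nonneg sv) (norm_nonneg xv)] using hsx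
  have hA : IsUnit A := isUnit_paravector_quadratic (cliffordQ_ι_mul_ι n xv)
    (sq_nonneg _) (sq_nonneg _) hsx'
  have hB : IsUnit B := isUnit_paravector_quadratic (cliffordQ_ι_mul_ι n sv)
    (sq_nonneg _) (sq_nonneg _) hsx'.symm
  refine ⟨hA, hB, ?_⟩
  rw [← mul_neg]
  refine Ring.inverse_mul_eq_mul_inverse hA hB ?_
  rw [neg_mul]
  exact paravector_quadratic_mul_sub_eq_neg_sub_mul (cliffordQ_ι_mul_ι n xv) (cliffordQ_ι_mul_ι n sv) x₀ s₀

/-- For paravectors `x = x₀ + ι x̲` and `s = s₀ + ι s̲` in the real Clifford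
algebra `ℝ_n` with `s ∉ [x]`, both `x² - 2s₀·x + (s₀² + ‖s̲‖²)` and
`s² - 2x₀·s + (x₀² + ‖x̲‖²)` are units, and the two forms of the left slice monogenic Cauchy
kernel agree:
`-(x² - 2s₀·x + (s₀² + ‖s̲‖²))⁻¹ · (x - s̄) = (s - x̄) · (s² - 2x₀·s + (x₀² + ‖x̲‖²))⁻¹`. -/
theorem left_cauchy_kernel_two_forms (n : ℕ) (hn : 1 ≤ n)
    (x₀ s₀ : ℝ) (xv sv : EuclideanSpace ℝ (Fin n))
    (hsx : (s₀, ‖sv‖) ≠ (x₀, ‖xv‖)) :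
    let ιQ := CliffordAlgebra.ι (cliffordQ n)
    let x : CliffordAlgebra (cliffordQ n) := algebraMap ℝ _ x₀ + ιQ xv
    let s : CliffordAlgebra (cliffordQ n) := algebraMap ℝ _ s₀ + ιQ sv
    let xbar : CliffordAlgebra (cliffordQ n) := algebraMap ℝ _ x₀ - ιQ xv
    let sbar : CliffordAlgebra (cliffordQ n) := algebraMap ℝ _ s₀ - ιQ sv
    let A : CliffordAlgebra (cliffordQ n) :=
      x ^ 2 - (2 * s₀) • x + algebraMap ℝ _ (s₀ ^ 2 + ‖sv‖ ^ 2)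
    let B : CliffordAlgebra (cliffordQ n) :=
      s ^ 2 - (2 * x₀) • s + algebraMap ℝ _ (x₀ ^ 2 + ‖xv‖ ^ 2)
    IsUnit A ∧ IsUnit B ∧
      -(Ring.inverse A * (x - sbar)) = (s - xbar) * Ring.inverse B :=
  left_cauchy_kernel_two_forms_general n x₀ s₀ xv sv hsx

end
end

section
/- Let n ≥ 1, let s ∈ ℝ, let h ∈ ℕ, and let U = {x ∈ ℝ^{n+1} : x ≠ (s,0,…,0)}. Set Q(x) = (s - x₀)² + Σ_{i=1}^n x_i² and let Δ = Σ_{i=0}^n ∂²/∂x_i² denote the Laplace operator on ℝ^{n+1}. Then on U the h-fold iterate of Δ satisfies Δ^h[(s - x₀)·Q(x)^{-1}] = C_{n,h}·(s - x₀)·Q(x)^{-(h+1)} and, for every j ∈ {1,…,n}, Δ^h[x_j·Q(x)^{-1}] = C_{n,h}·x_j·Q(x)^{-(h+1)}, where C_{n,h} = (-1)^h · ∏_{ℓ=1}^h (2ℓ) · ∏_{ℓ=1}^h (n - (2ℓ - 1)). (These are the components of the identity Δ^h S_L^{-1}(s,x) = C_{n,h}(s - x̄)(s² - 2Re(x)s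 + |x|²)^{-(h+1)} for real s.) -/
noncomputable section

open Finset

/-- Partial derivative of `f : ℝ^{m} → ℝ` in the `i`-th coordinate direction. -/
def pderiv' {m : ℕ} (i : Fin m) (f : (Fin m → ℝ) → ℝ) : (Fin m → ℝ) → ℝ :=
  fun x => fderiv ℝ f x (Pi.single i 1)

/-- The Laplace operator `Δ = Σ_i ∂²/∂x_i²` on functions `ℝ^{m} → ℝ`. -/
def laplacian' {m : ℕ} (f : (Fin m → ℝ) → ℝ) : (Fin m → ℝ) → ℝ :=
  fun x => ∑ i : Fin m, pderiv' i (pderiv' i f) x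

/-!
With `c = (s, 0, …, 0)`, `u_j(y) = y_j - c_j` and `Q(y) = |y - c|²`, both components are
`±u_j Q⁻¹`. In `ℝ^N` one has `∂_k (u_j Q^{-m}) = δ_{jk} Q^{-m} - 2m u_j u_k Q^{-(m+1)}`;
differentiating once more and summing over `k` with `Σ_k u_k² = Q` gives
`Δ(u_j Q^{-m}) = 2m(2m - N) u_j Q^{-(m+1)}`.
Iterating from `m = 1` with `N = n + 1` produces `∏_{ℓ=1}^h 2ℓ(2ℓ - n - 1) = C_{n,h}`.
-/

open Filter Topology

variable {N : ℕ}

def sqDist (c y : Fin N → ℝ) : ℝ := ∑ i, (y i - c i) ^ 2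

def coordKernel (c : Fin N → ℝ) (j : Fin N) (m : ℕ) (y : Fin N → ℝ) : ℝ :=
  (y j - c j) * (sqDist c y ^ m)⁻¹

def innerSub (c y : Fin N → ℝ) : (Fin N → ℝ) →L[ℝ] ℝ :=
  ∑ i, (y i - c i) • ContinuousLinearMap.proj (R := ℝ) i

lemma innerSub_single (c y : Fin N → ℝ) (k : Fin N) :
    innerSub c y (Pi.single k 1) = y k - c k := by
  simp [innerSub, Pi.single_apply]

lemma pderiv'_eq_of_hasFDerivAt {f : (Fin N → ℝ) → ℝ} {f' : (Fin N → ℝ) →L[ℝ] ℝ}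
    {x : Fin N → ℝ} (hf : HasFDerivAt f f' x) (i : Fin N) :
    pderiv' i f x = f' (Pi.single i 1) := by
  rw [pderiv', hf.fderiv]

lemma pderiv'_const_mul (a : ℝ) (f : (Fin N → ℝ) → ℝ) (i : Fin N) :
    pderiv' i (fun y => a * f y) = fun x => a * pderiv' i f x := by
  funext x
  change fderiv ℝ (a • f) x (Pi.single i 1) = _
  rw [fderiv_const_smul_field (𝕜 := ℝ) a]
  rfl

lemma laplacian'_const_mul (a : ℝ) (f : (Fin N → ℝ) → ℝ) :
    laplacian' (fun y => a * f y) = fun x => a * laplacian' f x := by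
  funext x
  simp only [laplacian', pderiv'_const_mul, mul_sum]

lemma iterate_laplacian'_const_mul (a : ℝ) (f : (Fin N → ℝ) → ℝ) (h : ℕ) :
    laplacian'^[h] (fun y => a * f y) = fun x => a * laplacian'^[h] f x :=
  Function.Commute.iterate_left (fun g => laplacian'_const_mul a g) h f

lemma Filter.EventuallyEq.pderiv' {f g : (Fin N → ℝ) → ℝ} {x : Fin N → ℝ}
    (hfg : f =ᶠ[𝓝 x] g) (i : Fin N) : _root_.pderiv' i f =ᶠ[𝓝 x] _root_.pderiv' i g := by
  filter_upwards [hfg.eventually_nhds] with y hy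
  simp only [_root_.pderiv', Filter.EventuallyEq.fderiv_eq (𝕜 := ℝ) hy]

lemma Filter.EventuallyEq.laplacian'_eq {f g : (Fin N → ℝ) → ℝ} {x : Fin N → ℝ}
    (hfg : f =ᶠ[𝓝 x] g) : laplacian' f x = laplacian' g x :=
  sum_congr rfl fun i _ => ((hfg.pderiv' i).pderiv' i).eq_of_nhds

lemma continuous_sqDist (c : Fin N → ℝ) : Continuous (sqDist c) := by
  unfold sqDist
  fun_prop

lemma isOpen_sqDist_ne_zero (c : Fin N → ℝ) : IsOpen {y | sqDist c y ≠ 0} :=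
  isOpen_ne_fun (continuous_sqDist c) continuous_const

lemma sqDist_ne_zero {c y : Fin N → ℝ} (hy : y ≠ c) : sqDist c y ≠ 0 := by
  contrapose! hy
  funext i
  have := (sum_eq_zero_iff_of_nonneg fun i _ => sq_nonneg (y i - c i)).1 hy i (mem_univ i)
  linarith [pow_eq_zero_iff (n := 2) two_ne_zero |>.1 this]

lemma hasFDerivAt_sub_apply (c x : Fin N → ℝ) (j : Fin N) :
    HasFDerivAt (fun y : Fin N → ℝ => y j - c j) (ContinuousLinearMap.proj (R := ℝ) j) x :=
  (hasFDerivAt_apply j x).sub_const (c j)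

lemma hasFDerivAt_sqDist (c x : Fin N → ℝ) :
    HasFDerivAt (sqDist c) ((2 : ℝ) • innerSub c x) x := by
  have hterm (i : Fin N) : HasFDerivAt (fun y : Fin N → ℝ => (y i - c i) ^ 2)
      ((2 * (x i - c i)) • ContinuousLinearMap.proj (R := ℝ) i) x := by
    simpa using (hasFDerivAt_sub_apply c x i).pow 2
  refine (HasFDerivAt.fun_sum fun i _ => hterm i).congr_fderiv ?_
  simp only [innerSub, smul_sum, smul_smul]

lemma hasDerivAt_inv_pow {t : ℝ} (ht : t ≠ 0) (m : ℕ) :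
    HasDerivAt (fun t => (t ^ m)⁻¹) (-m * (t ^ (m + 1))⁻¹) t := by
  refine ((hasDerivAt_pow m t).inv (pow_ne_zero m ht)).congr_deriv ?_
  rcases m with _ | m
  · simp
  · rw [Nat.add_sub_cancel]
    field_simp
    ring

lemma hasFDerivAt_inv_sqDist_pow {c x : Fin N → ℝ} (hx : sqDist c x ≠ 0) (m : ℕ) :
    HasFDerivAt (fun y => (sqDist c y ^ m)⁻¹)
      ((-(2 * m) * (sqDist c x ^ (m + 1))⁻¹) • innerSub c x) x := by
  refine ((hasDerivAt_inv_pow hx m).comp_hasFDerivAt x (hasFDerivAt_sqDist c x)).congr_fderiv ?_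
  rw [smul_smul]
  ring_nf

lemma hasFDerivAt_coordKernel {c x : Fin N → ℝ} (hx : sqDist c x ≠ 0) (j : Fin N) (m : ℕ) :
    HasFDerivAt (coordKernel c j m)
      ((sqDist c x ^ m)⁻¹ • ContinuousLinearMap.proj (R := ℝ) j
        - (2 * m * (x j - c j) * (sqDist c x ^ (m + 1))⁻¹) • innerSub c x) x := by
  refine ((hasFDerivAt_sub_apply c x j).mul (hasFDerivAt_inv_sqDist_pow hx m)).congr_fderiv ?_
  ext v
  simp only [add_apply, sub_apply, smul_apply, smul_eq_mul, ContinuousLinearMap.proj_apply]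
  ring

lemma pderiv'_coordKernel {c x : Fin N → ℝ} (hx : sqDist c x ≠ 0) (j k : Fin N) (m : ℕ) :
    pderiv' k (coordKernel c j m) x = (if j = k then 1 else 0) * (sqDist c x ^ m)⁻¹
      - 2 * m * ((x k - c k) * coordKernel c j (m + 1) x) := by
  rw [pderiv'_eq_of_hasFDerivAt (hasFDerivAt_coordKernel hx j m)]
  simp only [sub_apply, smul_apply, smul_eq_mul, ContinuousLinearMap.proj_apply,
    Pi.single_apply, innerSub_single, coordKernel]
  ring

lemma pderiv'_pderiv'_coordKernel {c x : Fin N → ℝ} (hx : sqDist c x ≠ 0) (j k : Fin N)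
    (m : ℕ) :
    pderiv' k (pderiv' k (coordKernel c j m)) x =
      -2 * m * ((2 * (if j = k then 1 else 0) * (x k - c k) + (x j - c j))
          * (sqDist c x ^ (m + 1))⁻¹
        - 2 * (m + 1) * (x j - c j) * (x k - c k) ^ 2 * (sqDist c x ^ (m + 2))⁻¹) := by
  have hfirst : pderiv' k (coordKernel c j m) =ᶠ[𝓝 x] fun y =>
      (if j = k then 1 else 0) * (sqDist c y ^ m)⁻¹
        - 2 * m * ((y k - c k) * coordKernel c j (m + 1) y) := by
    filter_upwards [(isOpen_sqDist_ne_zero c).mem_nhds hx] with y hy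
    exact pderiv'_coordKernel hy j k m
  have hderiv :=
    ((hasFDerivAt_inv_sqDist_pow hx m).const_mul (if j = k then (1 : ℝ) else 0)).fun_sub
    (((hasFDerivAt_sub_apply c x k).fun_mul (hasFDerivAt_coordKernel hx j (m + 1))).const_mul
      (2 * (m : ℝ)))
  rw [(hfirst.pderiv' k).eq_of_nhds, pderiv'_eq_of_hasFDerivAt hderiv]
  simp only [sub_apply, add_apply, smul_apply, ContinuousLinearMap.proj_apply, innerSub_single,
    Pi.single_apply, smul_eq_mul, coordKernel, if_true, Nat.cast_add, Nat.cast_one]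
  generalize (if j = k then (1 : ℝ) else 0) = d
  field_simp
  ring

lemma laplacian'_coordKernel {c x : Fin N → ℝ} (hx : sqDist c x ≠ 0) (j : Fin N) (m : ℕ) :
    laplacian' (coordKernel c j m) x = 2 * m * (2 * m - N) * coordKernel c j (m + 1) x := by
  set w₁ := (sqDist c x ^ (m + 1))⁻¹
  set w₂ := (sqDist c x ^ (m + 2))⁻¹
  have hdelta : ∑ k, (if j = k then (1 : ℝ) else 0) * (x k - c k) = x j - c j := by simp
  have hw : sqDist c x * w₂ = w₁ := by
    simp only [w₁, w₂]
    field_simp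
    ring
  calc laplacian' (coordKernel c j m) x
      = ∑ k, (-4 * m * w₁ * ((if j = k then 1 else 0) * (x k - c k))
          - 2 * m * (x j - c j) * w₁ + 4 * m * (m + 1) * (x j - c j) * w₂ * (x k - c k) ^ 2) := by
        refine sum_congr rfl fun k _ => ?_
        rw [pderiv'_pderiv'_coordKernel hx]
        ring
    _ = -4 * m * w₁ * (x j - c j) - N * (2 * m * (x j - c j) * w₁)
          + 4 * m * (m + 1) * (x j - c j) * (sqDist c x * w₂) := by
        simp only [sum_add_distrib, sum_sub_distrib, ← mul_sum, hdelta, sum_const, card_univ,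
          show ∑ k, (x k - c k) ^ 2 = sqDist c x from rfl,
          Fintype.card_fin, nsmul_eq_mul]
        ring
    _ = 2 * m * (2 * m - N) * coordKernel c j (m + 1) x := by
        rw [hw, coordKernel]
        ring

lemma iterate_laplacian'_coordKernel (c : Fin N → ℝ) (j : Fin N) (m h : ℕ) {x : Fin N → ℝ}
    (hx : sqDist c x ≠ 0) :
    laplacian'^[h] (coordKernel c j m) x =
      (∏ p ∈ range h, 2 * (m + p : ℝ) * (2 * (m + p : ℝ) - N)) * coordKernel c j (m + h) x := by
  induction h generalizing x with
  | zero => simp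
  | succ h ih =>
    have hnear : laplacian'^[h] (coordKernel c j m) =ᶠ[𝓝 x] fun y =>
        (∏ p ∈ range h, 2 * (m + p : ℝ) * (2 * (m + p : ℝ) - N)) * coordKernel c j (m + h) y := by
      filter_upwards [(isOpen_sqDist_ne_zero c).mem_nhds hx] with y hy
      exact ih hy
    simp only [Function.iterate_succ_apply', hnear.laplacian'_eq, laplacian'_const_mul,
      laplacian'_coordKernel hx, prod_range_succ, Nat.cast_add, ← add_assoc, mul_assoc]

lemma sqDist_single_zero {n : ℕ} (s : ℝ) (y : Fin (n + 1) → ℝ) :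
    sqDist (Pi.single 0 s) y = (s - y 0) ^ 2 + ∑ i ∈ univ.erase 0, y i ^ 2 := by
  rw [sqDist, ← add_sum_erase _ _ (mem_univ 0)]
  congr 1
  · simp only [Pi.single_eq_same]
    ring
  · refine sum_congr rfl fun i hi => ?_
    rw [Pi.single_eq_of_ne (ne_of_mem_erase hi), sub_zero]

lemma neg_one_pow_mul_prod_Icc_eq_prod_range (n h : ℕ) :
    (-1 : ℝ) ^ h * (∏ ℓ ∈ Icc 1 h, (2 * ℓ : ℝ)) * ∏ ℓ ∈ Icc 1 h, ((n : ℝ) - (2 * ℓ - 1)) =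
      ∏ p ∈ range h, 2 * (1 + p : ℝ) * (2 * (1 + p : ℝ) - (n + 1 : ℝ)) := by
  induction h with
  | zero => simp
  | succ h ih =>
    rw [prod_Icc_succ_top (by omega), prod_Icc_succ_top (by omega), prod_range_succ, ← ih]
    push_cast
    ring

theorem iterated_laplacian_cauchy_kernel_general (n : ℕ) (s : ℝ) (h : ℕ) :
    let Q : (Fin (n + 1) → ℝ) → ℝ :=
      fun x => (s - x 0) ^ 2 + ∑ i ∈ Finset.univ.erase 0, x i ^ 2
    let C : ℝ := (-1 : ℝ) ^ h * (∏ ℓ ∈ Finset.Icc 1 h, (2 * ℓ : ℝ)) *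
      ∏ ℓ ∈ Finset.Icc 1 h, ((n : ℝ) - (2 * ℓ - 1))
    ∀ x : Fin (n + 1) → ℝ, x ≠ Pi.single 0 s →
      (laplacian'^[h] (fun y => (s - y 0) * (Q y)⁻¹) x
          = C * (s - x 0) * ((Q x) ^ (h + 1))⁻¹) ∧
      (∀ j : Fin (n + 1), j ≠ 0 →
        laplacian'^[h] (fun y => y j * (Q y)⁻¹) x
          = C * x j * ((Q x) ^ (h + 1))⁻¹) := by
  intro Q C x hx
  have hQ : Q = sqDist (Pi.single 0 s) := funext fun y => (sqDist_single_zero s y).symm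
  have hC : C = _ := neg_one_pow_mul_prod_Icc_eq_prod_range n h
  have hiter (j : Fin (n + 1)) := iterate_laplacian'_coordKernel _ j 1 h (sqDist_ne_zero hx)
  push_cast at hiter
  refine ⟨?_, fun j hj => ?_⟩
  · have hkernel :
        (fun y => (s - y 0) * (Q y)⁻¹) = fun y => -1 * coordKernel (Pi.single 0 s) 0 1 y := by
      funext y
      simp only [hQ, coordKernel, Pi.single_eq_same, pow_one]
      ring
    rw [hkernel, iterate_laplacian'_const_mul]
    beta_reduce
    rw [hiter, hC, hQ, coordKernel, Pi.single_eq_same, add_comm 1 h]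
    ring
  · have hkernel : (fun y => y j * (Q y)⁻¹) = coordKernel (Pi.single 0 s) j 1 := by
      funext y
      simp only [hQ, coordKernel, Pi.single_eq_of_ne hj, sub_zero, pow_one]
    rw [hkernel, hiter, hC, hQ, coordKernel, Pi.single_eq_of_ne hj, sub_zero, add_comm 1 h]
    ring

/-- For `s ∈ ℝ`, `h ∈ ℕ` and `Q(x) = (s - x₀)² + Σ_{i=1}^n x_i²`, on
`U = {x ∈ ℝ^{n+1} : x ≠ (s,0,…,0)}` the `h`-fold iterated Laplacian satisfies
`Δ^h[(s - x₀)Q(x)⁻¹] = C_{n,h}(s - x₀)Q(x)^{-(h+1)}` and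
`Δ^h[x_j Q(x)⁻¹] = C_{n,h} x_j Q(x)^{-(h+1)}` for `j = 1,…,n`, where
`C_{n,h} = (-1)^h ∏_{ℓ=1}^h (2ℓ) ∏_{ℓ=1}^h (n - (2ℓ-1))`. These are the components of
`Δ^h S_L^{-1}(s,x) = C_{n,h}(s - x̄)(s² - 2Re(x)s + |x|²)^{-(h+1)}` for real `s`. -/
theorem iterated_laplacian_cauchy_kernel (n : ℕ) (hn : 1 ≤ n) (s : ℝ) (h : ℕ) :
    let Q : (Fin (n + 1) → ℝ) → ℝ :=
      fun x => (s - x 0) ^ 2 + ∑ i ∈ Finset.univ.erase 0, x i ^ 2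
    let C : ℝ := (-1 : ℝ) ^ h * (∏ ℓ ∈ Finset.Icc 1 h, (2 * ℓ : ℝ)) *
      ∏ ℓ ∈ Finset.Icc 1 h, ((n : ℝ) - (2 * ℓ - 1))
    ∀ x : Fin (n + 1) → ℝ, x ≠ Pi.single 0 s →
      (laplacian'^[h] (fun y => (s - y 0) * (Q y)⁻¹) x
          = C * (s - x 0) * ((Q x) ^ (h + 1))⁻¹) ∧
      (∀ j : Fin (n + 1), j ≠ 0 →
        laplacian'^[h] (fun y => y j * (Q y)⁻¹) x
          = C * x j * ((Q x) ^ (h + 1))⁻¹) :=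
  iterated_laplacian_cauchy_kernel_general n s h

end
end
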